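/- Let κ be an uncountable regular cardinal with κ^{<κ}=κ. Every subset A of 2^κ with |A| < cov(M_κ) is κ-strongly null. -/

import Mathlib

noncomputable section

open Cardinal Set

namespace GenSp

/-- The index set: a canonical type of order type `κ.ord`. -/
abbrev I (κ : Cardinal.{0}) : Type := κ.ord.ToType

variable (κ : Cardinal.{0}) (A : Type)

/-- The generalized space `A^κ`. -/
abbrev Sp : Type := I κ → A

/-- The basic clopen set `[x ↾ ξ]`: all functions agreeing with `x` below `ξ`. -/
def cyl (x : Sp κ A) (ξ : I κ) : Set (Sp κ A) := {y | ∀ β < ξ, y β = x β}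

/-- The bounded topology on `A^κ`, generated by the basic clopen sets. -/
def bt : TopologicalSpace (Sp κ A) :=
  .generateFrom {S | ∃ x ξ, S = cyl κ A x ξ}

/-- Open in the bounded topology. -/
def OpenK (s : Set (Sp κ A)) : Prop := @IsOpen _ (bt κ A) s

/-- Closed in the bounded topology. -/
def ClosedK (s : Set (Sp κ A)) : Prop := @IsClosed _ (bt κ A) s

/-- Nowhere dense in the bounded topology. -/
def NwdK (s : Set (Sp κ A)) : Prop := @IsNowhereDense _ (bt κ A) s

/-- κ-meagre: a union of (at most) κ nowhere dense sets. -/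
def MeagreK (s : Set (Sp κ A)) : Prop :=
  ∃ f : I κ → Set (Sp κ A), (∀ i, NwdK κ A (f i)) ∧ s = ⋃ i, f i

/-- κ-strongly null set. -/
def SNullK (S : Set (Sp κ A)) : Prop :=
  ∀ ξ : I κ → I κ, ∃ a : I κ → Sp κ A, S ⊆ ⋃ α, cyl κ A (a α) (ξ α)

/-- Coordinatewise addition over `ℤ₂` (translation by `x`). -/
def xadd (x y : Sp κ Bool) : Sp κ Bool := fun i => xor (x i) (y i)

/-- The covering number of the κ-meagre ideal. -/
def covM : Cardinal :=
  sInf {c | ∃ 𝒜 : Set (Set (Sp κ A)), #𝒜 = c ∧ (∀ s ∈ 𝒜, MeagreK κ A s) ∧ ⋃₀ 𝒜 = Set.univ}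

/-- The cofinality of the κ-meagre ideal. -/
def cofM : Cardinal :=
  sInf {c | ∃ 𝒜 : Set (Set (Sp κ A)), #𝒜 = c ∧ (∀ s ∈ 𝒜, MeagreK κ A s) ∧
    ∀ t, MeagreK κ A t → ∃ s ∈ 𝒜, t ⊆ s}

/-- κ is weakly compact: uncountable and with the partition property κ → (κ)²₂. -/
def IsWeaklyCompact (κ : Cardinal.{0}) : Prop :=
  ℵ₀ < κ ∧ ∀ c : I κ → I κ → Bool, ∃ H : Set (I κ), #H = κ ∧
    ∃ b : Bool, ∀ i ∈ H, ∀ j ∈ H, i < j → c i j = b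

/-- `S` is κ-meagre relative to `P` (in the subspace topology). -/
def MeagreInK (P S : Set (Sp κ A)) : Prop :=
  ∃ f : I κ → Set P,
    (∀ i, @IsNowhereDense _ (TopologicalSpace.induced Subtype.val (bt κ A)) (f i)) ∧
    {x : P | (x : Sp κ A) ∈ S} = ⋃ i, f i

/-- Perfect set in the bounded topology. -/
def PerfK (P : Set (Sp κ A)) : Prop := @Perfect _ (bt κ A) P

/-- Perfectly κ-meagre set. -/
def PMeagreK (S : Set (Sp κ A)) : Prop := ∀ P, PerfK κ A P → MeagreInK κ A P S

/-- κ-λ-set. -/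
def KLambdaSet (S : Set (Sp κ A)) : Prop :=
  ∀ B ⊆ S, #B ≤ κ → ∃ G : I κ → Set (Sp κ A),
    (∀ i, OpenK κ A (G i)) ∧ (⋂ i, G i) ∩ S = B

/-- κ-σ-set. -/
def KSigmaSet (S : Set (Sp κ A)) : Prop :=
  ∀ F : I κ → Set (Sp κ A), (∀ i, ClosedK κ A (F i)) →
    ∃ G : I κ → Set (Sp κ A), (∀ i, OpenK κ A (G i)) ∧
      S ∩ (⋃ i, F i) = S ∩ (⋂ i, G i)

/-- κ-γ-set: every open (proper) κ-cover contains a κ-γ-subcover of size κ. -/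
def KGammaSet (X : Set (Sp κ A)) : Prop :=
  ∀ 𝒰 : Set (Set (Sp κ A)), (∀ U ∈ 𝒰, OpenK κ A U) → X ∉ 𝒰 →
    (∀ C ⊆ X, #C < κ → ∃ U ∈ 𝒰, C ⊆ U) →
    ∃ U : I κ → Set (Sp κ A), (∀ α, U α ∈ 𝒰) ∧
      X ⊆ ⋃ α, ⋂ β, ⋂ (_ : α < β), U β

/-- A (proper) open cover of `X` of size κ, indexed by `I κ`. -/
def IsOCovSeq (X : Set (Sp κ A)) (U : I κ → Set (Sp κ A)) : Prop :=
  (∀ α, OpenK κ A (U α)) ∧ (∀ α, U α ≠ X) ∧ X ⊆ ⋃ α, U α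

/-- A (proper) κ-γ-cover of `X`, indexed by `I κ`. -/
def IsGammaCovSeq (X : Set (Sp κ A)) (U : I κ → Set (Sp κ A)) : Prop :=
  (∀ α, OpenK κ A (U α)) ∧ (∀ α, U α ≠ X) ∧
    X ⊆ ⋃ α, ⋂ β, ⋂ (_ : α < β), U β

/-- The cover `U` is essentially of size κ: no subfamily of size `< κ` covers `X`. -/
def EssK (X : Set (Sp κ A)) (U : I κ → Set (Sp κ A)) : Prop :=
  ∀ s : Set (I κ), #s < κ → ¬ X ⊆ ⋃ β ∈ s, U β

/-- The selection principle `S₁^κ(Γ_κ, Γ_κ)`. -/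
def S1GammaGamma (X : Set (Sp κ A)) : Prop :=
  ∀ 𝒰 : I κ → I κ → Set (Sp κ A), (∀ α, IsGammaCovSeq κ A X (𝒰 α)) →
    ∃ f : I κ → I κ, IsGammaCovSeq κ A X (fun α => 𝒰 α (f α))

/-- The κ-Hurewicz property `U^κ_{<κ}(O_κ, Γ_κ)`. -/
def KHurewicz (X : Set (Sp κ A)) : Prop :=
  ∀ 𝒰 : I κ → I κ → Set (Sp κ A), (∀ α, IsOCovSeq κ A X (𝒰 α)) →
    (∀ α, EssK κ A X (𝒰 α)) →
    ∃ V : I κ → Set (I κ), (∀ α, #(V α) < κ) ∧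
      IsGammaCovSeq κ A X (fun α => ⋃ β ∈ V α, 𝒰 α β)

/-- The κ-Menger property `U^κ_{<κ}(O_κ, O_κ)`. -/
def KMenger (X : Set (Sp κ A)) : Prop :=
  ∀ 𝒰 : I κ → I κ → Set (Sp κ A), (∀ α, IsOCovSeq κ A X (𝒰 α)) →
    (∀ α, EssK κ A X (𝒰 α)) →
    ∃ V : I κ → Set (I κ), (∀ α, #(V α) < κ) ∧
      IsOCovSeq κ A X (fun α => ⋃ β ∈ V α, 𝒰 α β)

/-- The κ-Rothberger property `S₁^κ(O_κ, O_κ)`. -/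
def KRothberger (X : Set (Sp κ A)) : Prop :=
  ∀ 𝒰 : I κ → I κ → Set (Sp κ A), (∀ α, IsOCovSeq κ A X (𝒰 α)) →
    ∃ f : I κ → I κ, IsOCovSeq κ A X (fun α => 𝒰 α (f α))

/-- Closed unbounded subset of `I κ`. -/
def IsClubK (S : Set (I κ)) : Prop :=
  (∀ a : I κ, ∃ b ∈ S, a < b) ∧
  (∀ a : I κ, (∃ b, b < a) → (∀ b < a, ∃ c ∈ S, b < c ∧ c < a) → a ∈ S)

/-- Stationary subset of `I κ`. -/
def IsStatK (S : Set (I κ)) : Prop :=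
  ∀ C : Set (I κ), IsClubK κ C → (S ∩ C).Nonempty

/-- The diamond principle `◇_κ(E)`. -/
def DiamondK (E : Set (I κ)) : Prop :=
  ∃ s : I κ → Set (I κ), (∀ α, s α ⊆ Iio α) ∧
    ∀ X : Set (I κ), IsStatK κ {α | α ∈ E ∧ X ∩ Iio α = s α}

/-- The guessing principle `◇_κ(E, 2^κ, NS_κ)`. -/
def DiamondFunK (E : Set (I κ)) : Prop :=
  ∃ s : I κ → Sp κ Bool,
    ∀ x : Sp κ Bool, IsStatK κ {α | α ∈ E ∧ ∀ β < α, x β = s α β}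

/-- `S` is `X`-small. -/
def XSmall (X : Set (I κ)) (S : Set (Sp κ A)) : Prop :=
  ∃ a : I κ → Sp κ A, S ⊆ ⋃ α ∈ X, cyl κ A (a α) α

/-- `S` is small in `A^κ`. -/
def SmallK (S : Set (Sp κ A)) : Prop :=
  ∃ lam : Cardinal, lam < κ ∧ ∀ α : I κ, ∃ T : Set (Sp κ A),
    #T ≤ lam ∧ S ⊆ ⋃ x ∈ T, cyl κ A x α

/-!
Fix a bijection `p : κ × κ ≃ κ`, which splits a point `z` of `A^κ` into the `κ` blocks
`β ↦ z (p (α, β))`. Given `ξ`, the points one of whose blocks `α` agrees with `x` below `ξ α`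
form an open set, since by regularity each such condition only involves coordinates below some
`ζ < κ`, and a dense one, since a block can be chosen to lie entirely above any given `ζ`. The
complements are nowhere dense, so as `|S| < cov(M_κ)` a single `z` lies in all these sets for
`x ∈ S`, and the blocks of `z` are the centres of the required cover.
-/

variable {κ A}

theorem nonempty_I_of_isRegular (hreg : κ.IsRegular) : Nonempty (I κ) := by
  rw [← mk_ne_zero_iff, mk_ord_toType]
  exact hreg.ne_zero

theorem exists_forall_lt_of_mk_lt (hreg : κ.IsRegular) {s : Set (I κ)} (hs : #s < κ) :
    ∃ ζ : I κ, ∀ i ∈ s, i < ζ := by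
  rw [← not_isCofinal_iff]
  intro hcof
  have hle := Order.cof_le hcof
  rw [Ordinal.cof_toType, hreg.cof_ord] at hle
  exact hle.not_gt hs

theorem exists_forall_le_apply_pair (p : I κ × I κ ≃ I κ) (ζ : I κ) :
    ∃ α, ∀ β, ζ ≤ p (α, β) := by
  by_contra! h
  choose g hg using h
  have hinj : Function.Injective fun α => (⟨p (α, g α), hg α⟩ : Iio ζ) := fun a b hab => by
    simpa using congrArg (fun u : Iio ζ => (p.symm u).1) hab
  have hlt : #(Iio ζ) < κ := by simpa using mk_Iio_lt ζ
  have hκ := (mk_le_of_injective hinj).trans_lt hlt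
  rw [mk_ord_toType] at hκ
  exact hκ.false

variable (κ A) in
theorem isTopologicalBasis_cyl [Nonempty (I κ)] :
    @TopologicalSpace.IsTopologicalBasis _ (bt κ A) {S | ∃ x ξ, S = cyl κ A x ξ} := by
  refine @TopologicalSpace.IsTopologicalBasis.mk _ (bt κ A) _ ?_ ?_ rfl
  · rintro _ ⟨x, ξ, rfl⟩ _ ⟨y, ζ, rfl⟩ z hz
    refine ⟨cyl κ A z (max ξ ζ), ⟨z, _, rfl⟩, fun β _ => rfl,
      fun w hw => ⟨fun β hβ => ?_, fun β hβ => ?_⟩⟩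
    · rw [hw β (hβ.trans_le (le_max_left _ _))]; exact hz.1 β hβ
    · rw [hw β (hβ.trans_le (le_max_right _ _))]; exact hz.2 β hβ
  · exact sUnion_eq_univ_iff.2 fun z =>
      ⟨cyl κ A z (Classical.arbitrary _), ⟨z, _, rfl⟩, fun _ _ => rfl⟩

theorem openK_cyl (x : Sp κ A) (ξ : I κ) : OpenK κ A (cyl κ A x ξ) :=
  TopologicalSpace.isOpen_generateFrom_of_mem ⟨x, ξ, rfl⟩

theorem openK_setOf_forall_apply_eq (hreg : κ.IsRegular) {J : Type} (hJ : #J < κ)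
    (f : J → I κ) (g : J → A) : OpenK κ A {z | ∀ j, z (f j) = g j} := by
  obtain ⟨ζ, hζ⟩ := exists_forall_lt_of_mk_lt hreg (mk_range_le.trans_lt hJ) (s := range f)
  rw [OpenK, @isOpen_iff_forall_mem_open]
  exact fun z hz => ⟨cyl κ A z ζ, fun y hy j => (hy _ (hζ _ (mem_range_self j))).trans (hz j),
    openK_cyl z ζ, fun _ _ => rfl⟩

theorem NwdK.meagreK [Nonempty (I κ)] {s : Set (Sp κ A)} (hs : NwdK κ A s) : MeagreK κ A s :=
  ⟨fun _ => s, fun _ => hs, (iUnion_const s).symm⟩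

theorem exists_forall_notMem_of_mk_lt_covM {ι : Type} (M : ι → Set (Sp κ A))
    (hM : ∀ i, MeagreK κ A (M i)) (hι : #ι < covM κ A) : ∃ z, ∀ i, z ∉ M i := by
  by_contra! h
  have hcov : covM κ A ≤ #(range M) :=
    csInf_le' ⟨range M, rfl, forall_mem_range.2 hM,
      sUnion_range M ▸ eq_univ_of_forall fun z => mem_iUnion.2 (h z)⟩
  exact (hcov.trans mk_range_le).not_gt hι

def codingSet (p : I κ × I κ ≃ I κ) (ξ : I κ → I κ) (x : Sp κ A) : Set (Sp κ A) :=
  ⋃ α, {z | ∀ β : Iio (ξ α), z (p (α, β)) = x β}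

theorem openK_codingSet (hreg : κ.IsRegular) (p : I κ × I κ ≃ I κ) (ξ : I κ → I κ)
    (x : Sp κ A) : OpenK κ A (codingSet p ξ x) :=
  @isOpen_iUnion _ _ (bt κ A) _ fun α =>
    openK_setOf_forall_apply_eq hreg (by simpa using mk_Iio_lt (ξ α)) _ _

theorem dense_codingSet [Nonempty (I κ)] (p : I κ × I κ ≃ I κ) (ξ : I κ → I κ) (x : Sp κ A) :
    @Dense _ (bt κ A) (codingSet p ξ x) := by
  let _ : TopologicalSpace (Sp κ A) := bt κ A
  rw [(isTopologicalBasis_cyl κ A).dense_iff]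
  rintro _ ⟨y, ζ, rfl⟩ -
  obtain ⟨α, hα⟩ := exists_forall_le_apply_pair p ζ
  refine ⟨fun i => if (p.symm i).1 = α then x (p.symm i).2 else y i, fun β hβ => if_neg ?_,
    mem_iUnion.2 ⟨α, fun β => by simp⟩⟩
  intro h
  exact (hα (p.symm β).2).not_gt (by rwa [← h, Prod.mk.eta, Equiv.apply_symm_apply])

theorem nwdK_compl_codingSet (hreg : κ.IsRegular) (p : I κ × I κ ≃ I κ) (ξ : I κ → I κ)
    (x : Sp κ A) : NwdK κ A (codingSet p ξ x)ᶜ := by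
  let _ : TopologicalSpace (Sp κ A) := bt κ A
  have := nonempty_I_of_isRegular hreg
  rw [NwdK, (openK_codingSet hreg p ξ x).isClosed_compl.isNowhereDense_iff,
    interior_eq_empty_iff_dense_compl, compl_compl]
  exact dense_codingSet p ξ x

theorem stmt7_general (κ : Cardinal.{0}) (hreg : κ.IsRegular)
    (S : Set (Sp κ Bool)) (hS : #S < covM κ Bool) :
    SNullK κ Bool S := by
  intro ξ
  have := nonempty_I_of_isRegular hreg
  obtain ⟨p⟩ : Nonempty (I κ × I κ ≃ I κ) := by
    rw [← Cardinal.eq, mk_prod, lift_id, mk_ord_toType, mul_eq_self hreg.aleph0_le]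
  obtain ⟨z, hz⟩ := exists_forall_notMem_of_mk_lt_covM (fun x : S => (codingSet p ξ x.1)ᶜ)
    (fun x => (nwdK_compl_codingSet hreg p ξ x.1).meagreK) hS
  refine ⟨fun α β => z (p (α, β)), fun x hx => ?_⟩
  obtain ⟨α, hα⟩ := mem_iUnion.1 (not_not.1 (hz ⟨x, hx⟩))
  exact mem_iUnion.2 ⟨α, fun β hβ => (hα ⟨β, hβ⟩).symm⟩

theorem stmt7 (κ : Cardinal.{0}) (hk : Cardinal.aleph0 < κ) (hreg : κ.IsRegular) (hpow : κ ^< κ = κ)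
    (S : Set (Sp κ Bool)) (hS : #S < covM κ Bool) :
    SNullK κ Bool S :=
  stmt7_general κ hreg S hS

end GenSp
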